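/- Let ψ be a transition map that is a ρ-contraction in its first argument (0 ≤ ρ < 1), let π be a probability measure on ℝ^d with finite first moment, let f : ℝ^d → ℝ be 1-Lipschitz, and let θ_k = ψ_ℓ(θ_{k-ℓ}, w) for some fixed driving inputs w. Define f̄_ℓ(w) = ∫ f(ψ_ℓ(x, w)) dπ(x). Then |f̄_ℓ(w) - f(θ_k)| ≤ ρ^ℓ (‖θ_{k-ℓ}‖ + ∫‖θ‖ dπ(θ)). -/

import Mathlib

/-! Couple the chain started from `x ∼ π` with the chain started from `θ_{k-ℓ}` by feeding both
the same inputs `w`: after `ℓ` contracting steps they are at most `ρ^ℓ ‖x - θ_{k-ℓ}‖` apart, and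
since `f` is 1-Lipschitz, averaging over `x` gives the bound. -/

open MeasureTheory

/-- The `ℓ`-fold iterated composition of a transition map `ψ` with a list of driving inputs. -/
def iterMap {E U : Type*} (ψ : E → U → E) : List U → E → E
  | [], θ => θ
  | u :: us, θ => iterMap ψ us (ψ θ u)

theorem lipschitzWith_iterMap {E U : Type*} [PseudoEMetricSpace E] {ψ : E → U → E} {K : NNReal}
    (hψ : ∀ u, LipschitzWith K (ψ · u)) : ∀ w : List U, LipschitzWith (K ^ w.length) (iterMap ψ w)
  | [] => by rw [List.length_nil, pow_zero]; exact LipschitzWith.id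
  | u :: us => by
    rw [List.length_cons, pow_succ]; exact (lipschitzWith_iterMap hψ us).comp (hψ u)

section LipschitzIntegral

variable {E : Type*} [NormedAddCommGroup E] [MeasurableSpace E] [OpensMeasurableSpace E]
  {μ : Measure E} {g : E → ℝ} {K : NNReal}

theorem LipschitzWith.integrable_of_integrable_norm [IsFiniteMeasure μ] (hg : LipschitzWith K g)
    (hmom : Integrable (‖·‖) μ) : Integrable g μ := by
  refine Integrable.mono' ((integrable_const |g 0|).add (hmom.const_mul K))
    hg.continuous.aestronglyMeasurable (ae_of_all _ fun x => ?_)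
  have hx : |g x - g 0| ≤ K * ‖x‖ := by simpa [Real.dist_eq] using hg.dist_le_mul x 0
  change |g x| ≤ |g 0| + K * ‖x‖
  linarith [abs_sub_abs_le_abs_sub (g x) (g 0)]

theorem LipschitzWith.abs_integral_sub_le [IsProbabilityMeasure μ] (hg : LipschitzWith K g)
    (hmom : Integrable (‖·‖) μ) (y : E) :
    |∫ x, g x ∂μ - g y| ≤ K * (‖y‖ + ∫ x, ‖x‖ ∂μ) := by
  have hg_int := hg.integrable_of_integrable_norm hmom
  calc |∫ x, g x ∂μ - g y| = |∫ x, (g x - g y) ∂μ| := by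
        rw [integral_sub hg_int (integrable_const _), integral_const]; simp
    _ ≤ ∫ x, |g x - g y| ∂μ := abs_integral_le_integral_abs
    _ ≤ ∫ x, K * (‖y‖ + ‖x‖) ∂μ := by
        refine integral_mono (hg_int.sub (integrable_const _)).abs
          (((integrable_const _).add hmom).const_mul _) fun x => ?_
        calc |g x - g y| ≤ K * ‖x - y‖ := by
              simpa [Real.dist_eq, dist_eq_norm] using hg.dist_le_mul x y
          _ ≤ K * (‖y‖ + ‖x‖) := by
            gcongr
            exact (_root_.norm_sub_le x y).trans_eq (add_comm _ _)
    _ = K * (‖y‖ + ∫ x, ‖x‖ ∂μ) := by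
        rw [integral_const_mul, integral_add (integrable_const _) hmom, integral_const]; simp

end LipschitzIntegral

theorem coupling_error_bound_general (d : ℕ)
    (ψ : EuclideanSpace ℝ (Fin d) → (Fin d → Set.Icc (0 : ℝ) 1) → EuclideanSpace ℝ (Fin d))
    (ρ : ℝ) (hρ0 : 0 ≤ ρ)
    (hcontr : ∀ θ θ' u, ‖ψ θ u - ψ θ' u‖ ≤ ρ * ‖θ - θ'‖)
    (π : Measure (EuclideanSpace ℝ (Fin d))) [IsProbabilityMeasure π]
    (hmom : Integrable (fun θ : EuclideanSpace ℝ (Fin d) => ‖θ‖) π)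
    (f : EuclideanSpace ℝ (Fin d) → ℝ) (hf : LipschitzWith 1 f)
    (ℓ : ℕ) (w : List (Fin d → Set.Icc (0 : ℝ) 1)) (hw : w.length = ℓ)
    (θprev θk : EuclideanSpace ℝ (Fin d)) (hθk : θk = iterMap ψ w θprev) :
    |(∫ x, f (iterMap ψ w x) ∂π) - f θk|
      ≤ ρ ^ ℓ * (‖θprev‖ + ∫ θ, ‖θ‖ ∂π) := by
  subst hθk hw
  lift ρ to NNReal using hρ0
  have hψ : ∀ u, LipschitzWith ρ (ψ · u) := fun u =>
    LipschitzWith.of_dist_le_mul fun θ θ' => by simpa [dist_eq_norm] using hcontr θ θ' u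
  simpa using (hf.comp (lipschitzWith_iterMap hψ w)).abs_integral_sub_le hmom θprev

/-- with `θ_k = ψ_ℓ(θ_{k-ℓ}, w)` and `f̄_ℓ(w) = ∫ f(ψ_ℓ(x,w)) dπ(x)`,
`|f̄_ℓ(w) - f(θ_k)| ≤ ρ^ℓ (‖θ_{k-ℓ}‖ + ∫‖θ‖ dπ(θ))`. -/
theorem coupling_error_bound (d : ℕ)
    (ψ : EuclideanSpace ℝ (Fin d) → (Fin d → Set.Icc (0 : ℝ) 1) → EuclideanSpace ℝ (Fin d))
    (ρ : ℝ) (hρ0 : 0 ≤ ρ) (hρ1 : ρ < 1)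
    (hcontr : ∀ θ θ' u, ‖ψ θ u - ψ θ' u‖ ≤ ρ * ‖θ - θ'‖)
    (π : Measure (EuclideanSpace ℝ (Fin d))) [IsProbabilityMeasure π]
    (hmom : Integrable (fun θ : EuclideanSpace ℝ (Fin d) => ‖θ‖) π)
    (f : EuclideanSpace ℝ (Fin d) → ℝ) (hf : LipschitzWith 1 f)
    (ℓ : ℕ) (w : List (Fin d → Set.Icc (0 : ℝ) 1)) (hw : w.length = ℓ)
    (θprev θk : EuclideanSpace ℝ (Fin d)) (hθk : θk = iterMap ψ w θprev) :
    |(∫ x, f (iterMap ψ w x) ∂π) - f θk|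
      ≤ ρ ^ ℓ * (‖θprev‖ + ∫ θ, ‖θ‖ ∂π) :=
  coupling_error_bound_general d ψ ρ hρ0 hcontr π hmom f hf ℓ w hw θprev θk hθk
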